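/- The function S(x) = ψ₁(e^x) − x + γ satisfies: S(x) + x is non-decreasing on [0,∞), and the improper Laplace integral L{S;s} = ∫_0^∞ e^{-sx} S(x) dx converges for Re s > 0 with L{S;s} = −ζ'(s+1)/(s ζ(s+1)) − 1/s² + γ/s. -/

import Mathlib

open Filter ArithmeticFunction MeasureTheory

/-- `ψ₁(y) = ∑_{n ≤ y} Λ(n)/n = ∑_{p^k ≤ y} (log p)/p^k`. -/
noncomputable def chebyshevPsi1 (y : ℝ) : ℝ :=
  ∑ n ∈ Finset.Icc 1 ⌊y⌋₊, Λ n / n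

/-- `S(x) = ψ₁(eˣ) − x + γ`. -/
noncomputable def Sfun (x : ℝ) : ℝ :=
  chebyshevPsi1 (Real.exp x) - x + Real.eulerMascheroniConstant

/-!
For `0 ≤ x ≤ T` the step function `ψ₁(eˣ)` is `∑_{n ≤ e^T} (Λ(n)/n) · 1[x ≥ log n]`, so
`∫₀ᵀ e^{-sx} ψ₁(eˣ) dx = s⁻¹ (∑_{n ≤ e^T} Λ(n) n^{-1-s} - e^{-sT} ψ₁(e^T))`.
As `T → ∞` the sum tends to the Dirichlet series `∑ Λ(n) n^{-1-s} = -ζ'(s+1)/ζ(s+1)`, and the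
boundary term vanishes because `ψ₁(y) ≤ C_ε y^ε` for every `ε > 0`. The affine part `γ - x` of `S`
is integrated explicitly, and `S(x) + x = ψ₁(eˣ) + γ` is monotone because `Λ ≥ 0`.
-/

section

open Complex

lemma norm_cexp_neg_mul_ofReal (s : ℂ) (x : ℝ) : ‖cexp (-s * x)‖ = Real.exp (-s.re * x) := by
  simp [norm_exp]

lemma tendsto_pow_mul_cexp_neg_mul_atTop {s : ℂ} (hs : 0 < s.re) (k : ℕ) :
    Tendsto (fun T : ℝ => (T : ℂ) ^ k * cexp (-s * T)) atTop (nhds 0) := by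
  rw [tendsto_zero_iff_norm_tendsto_zero]
  refine (tendsto_rpow_mul_exp_neg_mul_atTop_nhds_zero k s.re hs).congr' ?_
  filter_upwards [eventually_ge_atTop 0] with T hT
  rw [norm_mul, norm_pow, norm_real, Real.norm_of_nonneg hT, norm_cexp_neg_mul_ofReal,
    Real.rpow_natCast]

lemma integral_cexp_neg_mul_mul_affine {s : ℂ} (hs : s ≠ 0) (a b : ℂ) (T : ℝ) :
    ∫ x in (0 : ℝ)..T, cexp (-s * x) * (a * x + b) =
      a / s ^ 2 + b / s - cexp (-s * T) * ((a * T + b) / s + a / s ^ 2) := by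
  have hderiv : ∀ x : ℝ, HasDerivAt (fun y : ℝ => cexp (-s * y) * (-(a * y + b) / s - a / s ^ 2))
      (cexp (-s * x) * (a * x + b)) x := by
    intro x
    have hexp : HasDerivAt (fun y : ℂ => cexp (-s * y)) (cexp (-s * x) * -s) x := by
      simpa using ((hasDerivAt_id (x : ℂ)).const_mul (-s)).cexp
    have haff : HasDerivAt (fun y : ℂ => -(a * y + b) / s - a / s ^ 2) (-a / s) x := by
      simpa using ((((hasDerivAt_id (x : ℂ)).const_mul a).add_const b).neg.div_const s).sub_const
        (a / s ^ 2)
    convert (hexp.fun_mul haff).comp_ofReal using 1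
    field_simp
    ring
  rw [intervalIntegral.integral_eq_sub_of_hasDerivAt (fun x _ => hderiv x)
    (by apply Continuous.intervalIntegrable; fun_prop)]
  simp only [ofReal_zero, mul_zero, exp_zero, zero_add]
  ring

lemma tendsto_integral_cexp_neg_mul_mul_affine {s : ℂ} (hs : 0 < s.re) (a b : ℂ) :
    Tendsto (fun T : ℝ => ∫ x in (0 : ℝ)..T, cexp (-s * x) * (a * x + b)) atTop
      (nhds (a / s ^ 2 + b / s)) := by
  have hs0 : s ≠ 0 := fun h => by simp [h] at hs
  have hboundary := ((tendsto_pow_mul_cexp_neg_mul_atTop hs 1).const_mul (a / s)).add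
    ((tendsto_pow_mul_cexp_neg_mul_atTop hs 0).const_mul (b / s + a / s ^ 2))
  have hlim := (tendsto_const_nhds (x := a / s ^ 2 + b / s)).sub hboundary
  rw [mul_zero, mul_zero, add_zero, sub_zero] at hlim
  refine hlim.congr fun T => ?_
  rw [integral_cexp_neg_mul_mul_affine hs0]
  ring

lemma intervalIntegral.integral_indicator_Ici {E : Type*} [NormedAddCommGroup E]
    [NormedSpace ℝ E] {f : ℝ → E} {a b c : ℝ} (hac : a ≤ c) (hcb : c ≤ b) :
    ∫ x in a..b, (Set.Ici c).indicator f x = ∫ x in c..b, f x := by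
  rw [intervalIntegral.integral_of_le (hac.trans hcb), intervalIntegral.integral_of_le hcb,
    setIntegral_indicator measurableSet_Ici]
  refine setIntegral_congr_set (EventuallyLE.antisymm ?_ ?_)
  · refine LE.le.eventuallyLE (fun x hx => ?_) |>.trans Ioc_ae_eq_Icc.symm.le
    exact ⟨hx.2, hx.1.2⟩
  · exact LE.le.eventuallyLE fun x hx => ⟨⟨hac.trans_lt hx.1, hx.2⟩, hx.1.le⟩

lemma log_natCast_le_iff_mem_Icc_floor_exp {n : ℕ} (hn : 1 ≤ n) {x : ℝ} :
    Real.log n ≤ x ↔ n ∈ Finset.Icc 1 ⌊Real.exp x⌋₊ := by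
  rw [Real.log_le_iff_le_exp (by exact_mod_cast hn), Finset.mem_Icc,
    Nat.le_floor_iff (Real.exp_nonneg x)]
  exact ⟨fun h => ⟨hn, h⟩, And.right⟩

lemma sum_Icc_floor_exp_eq_sum_indicator {E : Type*} [AddCommMonoid E] (g : ℕ → ℝ → E)
    {x T : ℝ} (hxT : x ≤ T) :
    ∑ n ∈ Finset.Icc 1 ⌊Real.exp x⌋₊, g n x =
      ∑ n ∈ Finset.Icc 1 ⌊Real.exp T⌋₊, (Set.Ici (Real.log n)).indicator (g n) x := by
  rw [Finset.sum_indicator_eq_sum_filter]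
  refine Finset.sum_congr (Finset.ext fun n => ?_) fun _ _ => rfl
  rw [Finset.mem_filter, Set.mem_Ici]
  constructor
  · intro hnx
    have hn := (Finset.mem_Icc.mp hnx).1
    rw [← log_natCast_le_iff_mem_Icc_floor_exp hn] at hnx ⊢
    exact ⟨hnx.trans hxT, hnx⟩
  · rintro ⟨hnT, hnx⟩
    exact (log_natCast_le_iff_mem_Icc_floor_exp (Finset.mem_Icc.mp hnT).1).mp hnx

lemma integral_cexp_neg_mul_mul_sum_Icc_floor_exp (a : ℕ → ℂ) {s : ℂ} (hs : s ≠ 0) {T : ℝ}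
    (hT : 0 ≤ T) :
    ∫ x in (0 : ℝ)..T, cexp (-s * x) * ∑ n ∈ Finset.Icc 1 ⌊Real.exp x⌋₊, a n =
      (∑ n ∈ Finset.Icc 1 ⌊Real.exp T⌋₊, a n * (n : ℂ) ^ (-s)
        - cexp (-s * T) * ∑ n ∈ Finset.Icc 1 ⌊Real.exp T⌋₊, a n) / s := by
  have hcont : Continuous fun x : ℝ => cexp (-s * x) := by fun_prop
  calc ∫ x in (0 : ℝ)..T, cexp (-s * x) * ∑ n ∈ Finset.Icc 1 ⌊Real.exp x⌋₊, a n
      = ∫ x in (0 : ℝ)..T, ∑ n ∈ Finset.Icc 1 ⌊Real.exp T⌋₊,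
          (Set.Ici (Real.log n)).indicator (fun y => cexp (-s * y) * a n) x := by
        refine intervalIntegral.integral_congr fun x hx => ?_
        rw [Finset.mul_sum]
        exact sum_Icc_floor_exp_eq_sum_indicator (fun n y => cexp (-s * y) * a n)
          (Set.uIcc_of_le hT ▸ hx).2
    _ = ∑ n ∈ Finset.Icc 1 ⌊Real.exp T⌋₊, ∫ x in Real.log n..T, cexp (-s * x) * a n := by
        rw [intervalIntegral.integral_finsetSum]
        · refine Finset.sum_congr rfl fun n hn => ?_
          have hn1 := (Finset.mem_Icc.mp hn).1
          exact intervalIntegral.integral_indicator_Ici (Real.log_natCast_nonneg n)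
            ((log_natCast_le_iff_mem_Icc_floor_exp hn1).mpr hn)
        · intro n _
          rw [intervalIntegrable_iff_integrableOn_Ioc_of_le hT]
          exact ((hcont.mul_const (a n)).integrableOn_Ioc).indicator measurableSet_Ici
    _ = _ := by
        rw [Finset.mul_sum, ← Finset.sum_sub_distrib, Finset.sum_div]
        refine Finset.sum_congr rfl fun n hn => ?_
        have hn0 : (n : ℂ) ≠ 0 := by
          exact_mod_cast Nat.one_le_iff_ne_zero.mp (Finset.mem_Icc.mp hn).1
        rw [intervalIntegral.integral_mul_const, integral_exp_mul_complex (neg_ne_zero.mpr hs),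
          cpow_def_of_ne_zero hn0, ← natCast_log]
        field_simp
        ring

lemma LSeriesSummable.tendsto_sum_Icc_term {f : ℕ → ℂ} {s : ℂ} (hf : LSeriesSummable f s) :
    Tendsto (fun N => ∑ n ∈ Finset.Icc 1 N, LSeries.term f s n) atTop (nhds (LSeries f s)) := by
  refine ((hf.LSeriesHasSum.tendsto_sum_nat).comp (tendsto_add_atTop_nat 1)).congr fun N => ?_
  refine (Finset.sum_subset (fun n hn => ?_) fun n _ hn => ?_).symm
  · exact Finset.mem_range_succ_iff.mpr (Finset.mem_Icc.mp hn).2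
  · obtain rfl : n = 0 := by
      simp only [Finset.mem_range, Finset.mem_Icc, not_and, not_le] at *
      omega
    exact LSeries.term_zero f s

lemma vonMangoldt_div_mul_cpow_neg {n : ℕ} (hn : n ≠ 0) (s : ℂ) :
    (Λ n : ℂ) / n * (n : ℂ) ^ (-s) = LSeries.term (fun n => Λ n) (s + 1) n := by
  have hn0 : (n : ℂ) ≠ 0 := by exact_mod_cast hn
  rw [LSeries.term_of_ne_zero hn, cpow_neg, cpow_add _ _ hn0, cpow_one]
  field_simp

lemma chebyshevPsi1_mono : Monotone chebyshevPsi1 := fun _ _ hxy =>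
  Finset.sum_le_sum_of_subset_of_nonneg (Finset.Icc_subset_Icc_right (Nat.floor_le_floor hxy))
    fun n _ _ => div_nonneg vonMangoldt_nonneg n.cast_nonneg

lemma chebyshevPsi1_nonneg (y : ℝ) : 0 ≤ chebyshevPsi1 y :=
  Finset.sum_nonneg fun n _ => div_nonneg vonMangoldt_nonneg n.cast_nonneg

lemma ofReal_chebyshevPsi1 (y : ℝ) :
    (chebyshevPsi1 y : ℂ) = ∑ n ∈ Finset.Icc 1 ⌊y⌋₊, (Λ n : ℂ) / n := by
  simp [chebyshevPsi1]

lemma summable_vonMangoldt_div_rpow {σ : ℝ} (hσ : 1 < σ) :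
    Summable fun n : ℕ => Λ n / (n : ℝ) ^ σ := by
  refine LSeries.summable_real_of_abscissaOfAbsConv_lt <| lt_of_le_of_lt
    (LSeries.abscissaOfAbsConv_le_of_forall_lt_LSeriesSummable fun y hy => ?_)
    (by exact_mod_cast hσ)
  exact LSeriesSummable_vonMangoldt (by simpa using hy)

lemma chebyshevPsi1_le_rpow_mul_tsum {ε : ℝ} (hε : 0 < ε) {y : ℝ} (hy : 0 ≤ y) :
    chebyshevPsi1 y ≤ y ^ ε * ∑' n : ℕ, Λ n / (n : ℝ) ^ (1 + ε) := by
  have hsum := summable_vonMangoldt_div_rpow (lt_add_of_pos_right 1 hε)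
  calc chebyshevPsi1 y ≤ ∑ n ∈ Finset.Icc 1 ⌊y⌋₊, y ^ ε * (Λ n / (n : ℝ) ^ (1 + ε)) := by
        refine Finset.sum_le_sum fun n hn => ?_
        have hn0 : (0 : ℝ) < n := by exact_mod_cast (Finset.mem_Icc.mp hn).1
        have hny : (n : ℝ) ≤ y := (Nat.le_floor_iff hy).mp (Finset.mem_Icc.mp hn).2
        have hsplit : Λ n / n = n ^ ε * (Λ n / (n : ℝ) ^ (1 + ε)) := by
          rw [Real.rpow_add hn0, Real.rpow_one]
          field_simp
        rw [hsplit]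
        exact mul_le_mul_of_nonneg_right (Real.rpow_le_rpow hn0.le hny hε.le)
          (div_nonneg vonMangoldt_nonneg (by positivity))
    _ ≤ y ^ ε * ∑' n : ℕ, Λ n / (n : ℝ) ^ (1 + ε) := by
        rw [← Finset.mul_sum]
        exact mul_le_mul_of_nonneg_left (hsum.sum_le_tsum _ fun n _ =>
          div_nonneg vonMangoldt_nonneg (by positivity)) (by positivity)

lemma tendsto_cexp_neg_mul_mul_chebyshevPsi1_exp {s : ℂ} (hs : 0 < s.re) :
    Tendsto (fun T : ℝ => cexp (-s * T) * chebyshevPsi1 (Real.exp T)) atTop (nhds 0) := by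
  set A := ∑' n : ℕ, Λ n / (n : ℝ) ^ (1 + s.re / 2)
  have hdecay : Tendsto (fun T : ℝ => A * Real.exp (-(s.re / 2 * T))) atTop (nhds 0) := by
    simpa using (Real.tendsto_exp_neg_atTop_nhds_zero.comp
      (tendsto_id.const_mul_atTop (half_pos hs))).const_mul A
  refine squeeze_zero_norm (fun T => ?_) hdecay
  have hψ := chebyshevPsi1_le_rpow_mul_tsum (half_pos hs) (Real.exp_pos T).le
  rw [← Real.exp_mul] at hψ
  rw [norm_mul, norm_cexp_neg_mul_ofReal, norm_real, Real.norm_of_nonneg (chebyshevPsi1_nonneg _)]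
  calc Real.exp (-s.re * T) * chebyshevPsi1 (Real.exp T)
      ≤ Real.exp (-s.re * T) * (Real.exp (T * (s.re / 2)) * A) := by gcongr
    _ = A * Real.exp (-(s.re / 2 * T)) := by
      rw [mul_left_comm, ← mul_assoc, ← Real.exp_add, mul_comm]
      ring_nf

lemma intervalIntegrable_cexp_neg_mul_mul_chebyshevPsi1_exp (s : ℂ) {a b : ℝ} :
    IntervalIntegrable (fun x : ℝ => cexp (-s * x) * chebyshevPsi1 (Real.exp x)) volume a b := by
  have hψ : IntervalIntegrable (fun x => chebyshevPsi1 (Real.exp x)) volume a b :=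
    (chebyshevPsi1_mono.comp Real.exp_monotone).intervalIntegrable
  exact IntervalIntegrable.continuousOn_mul ⟨hψ.1.ofReal, hψ.2.ofReal⟩ (by fun_prop)

lemma tendsto_integral_cexp_neg_mul_mul_chebyshevPsi1_exp {s : ℂ} (hs : 0 < s.re) :
    Tendsto (fun T : ℝ => ∫ x in (0 : ℝ)..T, cexp (-s * x) * chebyshevPsi1 (Real.exp x)) atTop
      (nhds (LSeries (fun n => Λ n) (s + 1) / s)) := by
  have hs0 : s ≠ 0 := fun h => by simp [h] at hs
  have hpartial := (LSeriesSummable_vonMangoldt (s := s + 1) (by simpa using hs)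
    ).tendsto_sum_Icc_term.comp (tendsto_nat_floor_atTop.comp Real.tendsto_exp_atTop)
  have hlim := (hpartial.sub (tendsto_cexp_neg_mul_mul_chebyshevPsi1_exp hs)).div_const s
  rw [sub_zero] at hlim
  refine hlim.congr' ?_
  filter_upwards [eventually_ge_atTop 0] with T hT
  simp only [ofReal_chebyshevPsi1, Function.comp_apply]
  rw [integral_cexp_neg_mul_mul_sum_Icc_floor_exp _ hs0 hT]
  congr 2
  exact Finset.sum_congr rfl fun n hn =>
    (vonMangoldt_div_mul_cpow_neg (Nat.one_le_iff_ne_zero.mp (Finset.mem_Icc.mp hn).1) s).symm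

end

theorem stmt19 :
    MonotoneOn (fun x : ℝ => Sfun x + x) (Set.Ici 0) ∧
    ∀ s : ℂ, 0 < s.re →
      Tendsto (fun T : ℝ => ∫ x in (0:ℝ)..T, Complex.exp (-s * x) * (Sfun x : ℂ))
        atTop
        (nhds (-(deriv riemannZeta (s + 1)) / (s * riemannZeta (s + 1))
          - 1 / s ^ 2 + (Real.eulerMascheroniConstant : ℂ) / s)) := by
  refine ⟨fun x _ y _ hxy => ?_, fun s hs => ?_⟩
  · dsimp only [Sfun]
    linarith [chebyshevPsi1_mono (Real.exp_le_exp.mpr hxy)]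
  set γ := Real.eulerMascheroniConstant
  have hlim := (tendsto_integral_cexp_neg_mul_mul_chebyshevPsi1_exp hs).add
    (tendsto_integral_cexp_neg_mul_mul_affine hs (-1) γ)
  rw [LSeries_vonMangoldt_eq_deriv_riemannZeta_div (by simpa using hs)] at hlim
  convert hlim using 2 with T
  · rw [← intervalIntegral.integral_add (intervalIntegrable_cexp_neg_mul_mul_chebyshevPsi1_exp s)
      (by apply Continuous.intervalIntegrable; fun_prop)]
    congr 1 with x
    simp only [Sfun]
    push_cast
    ring
  · ring
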